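/- arXiv:1512.09198 — 2 statements merged into one kernel-verified Lean document; each statement's English description precedes it below -/
import Mathlib

section
/- Let V be an oriented 4-dimensional real vector space, g an inner product, ρ a 2-form with ρ∧ρ = 2u·dvol_g, u > 0, and A ∈ GL(V) defined by g(A·,·) = ρ. Define the inner product g̃(v,w) := u⁻¹ g(Av,Aw). Then dvol_g̃ = dvol_g and for every covector λ ∈ V*, *_g̃ λ = u⁻¹ ρ ∧ *_g(ρ ∧ λ). -/
open Matrix MeasureTheory

noncomputable section

/-- Vectors in ℝ⁴. -/
abbrev V4 : Type := Fin 4 → ℝ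

/-- 2-forms on ℝ⁴, represented by their (antisymmetric) coefficient matrices. -/
abbrev Mat4 : Type := Matrix (Fin 4) (Fin 4) ℝ

/-- The wedge product of two 2-forms, as the coefficient of dx0∧dx1∧dx2∧dx3. -/
def w22 (A B : Mat4) : ℝ :=
  A 0 1 * B 2 3 - A 0 2 * B 1 3 + A 0 3 * B 1 2 +
  A 2 3 * B 0 1 - A 1 3 * B 0 2 + A 1 2 * B 0 3

/-- The wedge product of a 1-form and a 3-form (3-forms are written in the
basis σ_m = ι(e_m)(dx0∧dx1∧dx2∧dx3)), as a multiple of dx0∧dx1∧dx2∧dx3. -/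
def w13 (l b : V4) : ℝ := l ⬝ᵥ b

/-- The wedge product of a 2-form and a 1-form, as a 3-form in the basis σ_m. -/
def w21 (A : Mat4) (l : V4) : V4 :=
  ![A 1 2 * l 3 - A 1 3 * l 2 + A 2 3 * l 1,
    -(A 0 2 * l 3 - A 0 3 * l 2 + A 2 3 * l 0),
    A 0 1 * l 3 - A 0 3 * l 1 + A 1 3 * l 0,
    -(A 0 1 * l 2 - A 0 2 * l 1 + A 1 2 * l 0)]

/-- Interior product of a vector with a 2-form. -/
def iota2 (v : V4) (A : Mat4) : V4 := Aᵀ.mulVec v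

/-- Interior product of a vector with a 4-form c·dx0∧dx1∧dx2∧dx3. -/
def iota4 (v : V4) (c : ℝ) : V4 := c • v

/-- The metric volume form of the inner product with Gram matrix G, as a
multiple of dx0∧dx1∧dx2∧dx3 (standard orientation). -/
def volScalar (G : Mat4) : ℝ := Real.sqrt G.det

/-- The inner product with Gram matrix G. -/
def bilin (G : Mat4) (v w : V4) : ℝ := v ⬝ᵥ G.mulVec w

/-- The induced inner product on 1-forms. -/
def ip1 (G : Mat4) (l m : V4) : ℝ := l ⬝ᵥ G⁻¹.mulVec m

/-- The induced inner product on 2-forms. -/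
def ip2 (G : Mat4) (A B : Mat4) : ℝ := (1 / 2) * (Aᵀ * G⁻¹ * B * G⁻¹).trace

/-- The wedge-duality involution on 2-forms (the Hodge star of the standard
metric), characterized by w22 A (dual2 B) = ip2 1 A B. -/
def dual2 (A : Mat4) : Mat4 :=
  !![0, A 2 3, -(A 1 3), A 1 2;
     -(A 2 3), 0, A 0 3, -(A 0 2);
     A 1 3, -(A 0 3), 0, A 0 1;
     -(A 1 2), A 0 2, -(A 0 1), 0]

/-- The Hodge star on 2-forms of the metric with Gram matrix G,
characterized by α ∧ (hodge2 G β) = ⟨α,β⟩_G dvol_G. -/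
def hodge2 (G : Mat4) (A : Mat4) : Mat4 := volScalar G • dual2 (G⁻¹ * A * G⁻¹)

/-- The Hodge star Λ¹ → Λ³ of G, characterized by λ ∧ (hodge1 G μ) = ⟨λ,μ⟩_G dvol_G. -/
def hodge1 (G : Mat4) (m : V4) : V4 := volScalar G • G⁻¹.mulVec m

/-- The Hodge star Λ³ → Λ¹ of G, characterized by hodge1 G (hodge3 G b) = -b. -/
def hodge3 (G : Mat4) (b : V4) : V4 := -((volScalar G)⁻¹ • G.mulVec b)

/-- A complex structure J (J² = -1) is compatible with the standard orientation. -/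
def posOrient (J : Mat4) : Prop :=
  ∃ v w : V4, 0 < (Matrix.of fun i k => ![v, J.mulVec v, w, J.mulVec w] k i).det

/-- The inner product on 2-forms induced by the standard metric. -/
def ip2std (A B : Mat4) : ℝ := (1 / 2) * (Aᵀ * B).trace

/-- The involution R^ρ of the space of 2-forms determined by a
nondegenerate 2-form ρ (with matrix P). -/
def Rmap (P A : Mat4) : Mat4 := A - (w22 A P / (w22 P P / 2)) • P

/-- The standard hyperKähler triple ω₁ = dx0∧dx1 + dx2∧dx3, etc. -/
def sW1 : Mat4 := !![0,1,0,0; -1,0,0,0; 0,0,0,1; 0,0,-1,0]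
def sW2 : Mat4 := !![0,0,1,0; 0,0,0,-1; -1,0,0,0; 0,1,0,0]
def sW3 : Mat4 := !![0,0,0,1; 0,0,1,0; 0,-1,0,0; -1,0,0,0]

/-
With ρ = g(A·,·) skew, A = -g⁻¹ρ and hence g̃ = -u⁻¹ ρ g⁻¹ ρ as Gram matrices. In dimension four
a skew matrix ρ satisfies ρ ⋆ρ = -pf(ρ)·1 and det ρ = pf(ρ)², where ⋆ is the standard duality on
2-forms (so that ρ ∧ λ is ⋆ρ λ) and pf(ρ) = u √det g by the normalisation ρ ∧ ρ = 2u dvol_g. This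
gives det g̃ = det g and the explicit inverse g̃⁻¹ = -u⁻¹ (det g)⁻¹ ⋆ρ g ⋆ρ, and *_g̃ λ is √det g̃ · g̃⁻¹ λ.
-/

namespace Matrix

variable {n R : Type*} [Fintype n] [CommRing R]

theorem ext_of_forall_dotProduct_mulVec {M N : Matrix n n R}
    (h : ∀ v w : n → R, v ⬝ᵥ M *ᵥ w = v ⬝ᵥ N *ᵥ w) : M = N :=
  ext_iff_mulVec.2 fun w => dotProduct_eq_iff.1 fun v => by
    rw [dotProduct_comm, h, dotProduct_comm]

theorem mulVec_dotProduct_eq_dotProduct_transpose_mulVec (A : Matrix n n R) (v x : n → R) :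
    A *ᵥ v ⬝ᵥ x = v ⬝ᵥ Aᵀ *ᵥ x := by
  rw [dotProduct_comm, dotProduct_mulVec, mulVec_transpose, dotProduct_comm]

theorem transpose_mul_eq_of_forall_dotProduct {A G P : Matrix n n R}
    (h : ∀ v w : n → R, A *ᵥ v ⬝ᵥ G *ᵥ w = v ⬝ᵥ P *ᵥ w) : Aᵀ * G = P :=
  ext_of_forall_dotProduct_mulVec fun v w => by
    rw [← h, mulVec_dotProduct_eq_dotProduct_transpose_mulVec, mulVec_mulVec]

theorem eq_smul_transpose_mul_mul_of_forall_dotProduct {A G H : Matrix n n R} {c : R}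
    (h : ∀ v w : n → R, v ⬝ᵥ H *ᵥ w = c * (A *ᵥ v ⬝ᵥ G *ᵥ (A *ᵥ w))) :
    H = c • (Aᵀ * G * A) :=
  ext_of_forall_dotProduct_mulVec fun v w => by
    rw [h, mulVec_dotProduct_eq_dotProduct_transpose_mulVec, mulVec_mulVec, mulVec_mulVec,
      smul_mulVec, dotProduct_smul, smul_eq_mul, Matrix.mul_assoc]

theorem transpose_mul_mul_eq_neg_mul_inv_mul {A G P : Matrix n n R} [DecidableEq n]
    (hG : Gᵀ = G) (hGdet : IsUnit G.det) (hP : Pᵀ = -P) (hAG : Aᵀ * G = P) :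
    Aᵀ * G * A = -(P * G⁻¹ * P) := by
  have hGA : G * A = -P := by
    simpa only [transpose_mul, transpose_transpose, hG, hP] using congrArg transpose hAG
  have hA : A = -(G⁻¹ * P) := by
    rw [← Matrix.mul_neg, ← hGA, ← Matrix.mul_assoc, nonsing_inv_mul G hGdet, Matrix.one_mul]
  rw [hAG, hA, Matrix.mul_neg, Matrix.mul_assoc]

end Matrix

open Matrix

def pfaff4 (P : Mat4) : ℝ := P 0 1 * P 2 3 - P 0 2 * P 1 3 + P 0 3 * P 1 2

theorem w22_self (P : Mat4) : w22 P P = 2 * pfaff4 P := by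
  unfold w22 pfaff4
  ring

theorem eq_of_transpose_eq_neg {P : Mat4} (hP : Pᵀ = -P) :
    P = !![0, P 0 1, P 0 2, P 0 3;
           -(P 0 1), 0, P 1 2, P 1 3;
           -(P 0 2), -(P 1 2), 0, P 2 3;
           -(P 0 3), -(P 1 3), -(P 2 3), 0] := by
  have hskew : ∀ i j, P j i = -P i j := fun i j => by
    simpa using congrFun (congrFun hP i) j
  have hdiag : ∀ i, P i i = 0 := fun i => by linarith [hskew i i]
  ext i j
  fin_cases i <;> fin_cases j <;> simp [hdiag] <;> exact hskew _ _

theorem mul_dual2_of_transpose_eq_neg {P : Mat4} (hP : Pᵀ = -P) :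
    P * dual2 P = -pfaff4 P • (1 : Mat4) := by
  rw [eq_of_transpose_eq_neg hP]
  ext i j
  fin_cases i <;> fin_cases j <;>
    simp [mul_apply, dual2, pfaff4, Fin.sum_univ_four, one_apply] <;> ring

theorem det_of_transpose_eq_neg {P : Mat4} (hP : Pᵀ = -P) : P.det = pfaff4 P ^ 2 := by
  rw [eq_of_transpose_eq_neg hP]
  simp [det_succ_row_zero, Fin.sum_univ_succ, Fin.succAbove, pfaff4]
  ring

theorem w21_eq_dual2_mulVec (P : Mat4) (l : V4) : w21 P l = dual2 P *ᵥ l := by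
  ext i
  fin_cases i <;> simp [w21, dual2, mulVec, dotProduct, Fin.sum_univ_four] <;> ring

theorem det_mul_inv_mul_of_transpose_eq_neg {P : Mat4} (hP : Pᵀ = -P) (G : Mat4) :
    (P * G⁻¹ * P).det = pfaff4 P ^ 4 / G.det := by
  rw [det_mul, det_mul, det_nonsing_inv, Ring.inverse_eq_inv', det_of_transpose_eq_neg hP]
  ring

theorem mul_inv_mul_mul_dual2_mul_mul_dual2 {P G : Mat4} (hP : Pᵀ = -P) (hG : IsUnit G.det) :
    P * G⁻¹ * P * (dual2 P * G * dual2 P) = pfaff4 P ^ 2 • (1 : Mat4) := by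
  calc P * G⁻¹ * P * (dual2 P * G * dual2 P)
      = P * G⁻¹ * (P * dual2 P) * G * dual2 P := by simp only [Matrix.mul_assoc]
    _ = -pfaff4 P • (P * (G⁻¹ * G) * dual2 P) := by
        rw [mul_dual2_of_transpose_eq_neg hP]
        simp only [Matrix.mul_smul, Matrix.smul_mul, Matrix.mul_one, Matrix.mul_assoc]
    _ = pfaff4 P ^ 2 • (1 : Mat4) := by
        rw [nonsing_inv_mul G hG, Matrix.mul_one, mul_dual2_of_transpose_eq_neg hP, smul_smul]
        ring_nf

/-- for g̃(v,w) = u⁻¹g(Av,Aw) with g(A·,·) = ρ and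
ρ∧ρ = 2u·dvol_g, one has dvol_g̃ = dvol_g and *_g̃λ = u⁻¹ρ∧*_g(ρ∧λ). -/
theorem tilde_metric_volume_and_star1 (G : Mat4) (hG : G.PosDef)
    (P : Mat4) (hP : Pᵀ = -P)
    (u : ℝ) (hu : 0 < u) (huP : w22 P P = 2 * u * volScalar G)
    (A : Mat4) (hA : ∀ v w : V4, (A.mulVec v) ⬝ᵥ G.mulVec w = v ⬝ᵥ P.mulVec w)
    (Gt : Mat4)
    (hGt : ∀ v w : V4,
      v ⬝ᵥ Gt.mulVec w = u⁻¹ * ((A.mulVec v) ⬝ᵥ G.mulVec (A.mulVec w))) :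
    volScalar Gt = volScalar G ∧
      ∀ l : V4, hodge1 Gt l = u⁻¹ • w21 P (hodge3 G (w21 P l)) := by
  have hdet : 0 < G.det := hG.det_pos
  have hGdet : IsUnit G.det := hdet.ne'.isUnit
  have hs : 0 < volScalar G := Real.sqrt_pos.2 hdet
  have hs2 : G.det = volScalar G ^ 2 := (Real.sq_sqrt hdet.le).symm
  have hpf : pfaff4 P = u * volScalar G := by linarith [w22_self P]
  have hGsymm : Gᵀ = G := (conjTranspose_eq_transpose_of_trivial G).symm.trans hG.1
  have hGt' : Gt = -u⁻¹ • (P * G⁻¹ * P) := by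
    rw [eq_smul_transpose_mul_mul_of_forall_dotProduct hGt, transpose_mul_mul_eq_neg_mul_inv_mul
      hGsymm hGdet hP (transpose_mul_eq_of_forall_dotProduct hA), smul_neg, neg_smul]
  have hdetGt : Gt.det = G.det := by
    rw [hGt', det_smul, det_mul_inv_mul_of_transpose_eq_neg hP, hpf, hs2, Fintype.card_fin]
    field_simp
  have hvol : volScalar Gt = volScalar G := congrArg Real.sqrt hdetGt
  have hinv : Gt⁻¹ = -(u⁻¹ * (volScalar G ^ 2)⁻¹) • (dual2 P * G * dual2 P) := by
    refine inv_eq_right_inv ?_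
    rw [hGt', smul_mul_smul, mul_inv_mul_mul_dual2_mul_mul_dual2 hP hGdet, smul_smul, hpf]
    convert one_smul ℝ (1 : Mat4)
    field_simp
  refine ⟨hvol, fun l => ?_⟩
  rw [hodge1, hvol, hinv, w21_eq_dual2_mulVec, w21_eq_dual2_mulVec, hodge3, smul_mulVec,
    ← mulVec_mulVec, ← mulVec_mulVec, mulVec_neg, mulVec_smul, smul_smul, smul_neg, smul_smul,
    ← neg_smul]
  congr 1
  field_simp

end
end

section
/- Let V be an oriented 4-dimensional real vector space with inner product g, and ρ a 2-form with ρ∧ρ > 0. Set u := (|ρ⁺|² - |ρ⁻|²)/2 where ρ± are the self-dual and anti-self-dual parts of ρ, and define Θ := (*ρ)/u - (1/2)|ρ/u|²ρ. Then Θ∧ρ = 0, Θ = (2ρ⁺)/u - |ρ⁺/u|²ρ = -(|ρ⁻|²ρ⁺ + |ρ⁺|²ρ⁻)/u², and Θ∧Θ = -(2|ρ⁺|²|ρ⁻|²/u³)·dvol_g. -/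
open Matrix MeasureTheory

noncomputable section

/-! Split ρ = ρ⁺ + ρ⁻ into its self-dual and anti-self-dual parts. From α ∧ *β = ⟨α, β⟩ dvol and
** = 1, the wedge pairing is diagonal in this splitting: ρ⁺ ∧ ρ⁺ = |ρ⁺|² dvol,
ρ⁻ ∧ ρ⁻ = -|ρ⁻|² dvol and ρ⁺ ∧ ρ⁻ = 0, while ⟨ρ⁺, ρ⁻⟩ = 0. Since *ρ = ρ⁺ - ρ⁻ and
|ρ|² = |ρ⁺|² + |ρ⁻|², the relation 2u = |ρ⁺|² - |ρ⁻|² gives Θ = -(|ρ⁻|² ρ⁺ + |ρ⁺|² ρ⁻)/u²,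
and every identity follows by expanding in the splitting. -/

theorem Matrix.det_fin_four {R : Type*} [CommRing R] (M : Matrix (Fin 4) (Fin 4) R) : M.det =
    M 0 0 * (M 1 1 * (M 2 2 * M 3 3 - M 2 3 * M 3 2) - M 1 2 * (M 2 1 * M 3 3 - M 2 3 * M 3 1)
      + M 1 3 * (M 2 1 * M 3 2 - M 2 2 * M 3 1))
    - M 0 1 * (M 1 0 * (M 2 2 * M 3 3 - M 2 3 * M 3 2) - M 1 2 * (M 2 0 * M 3 3 - M 2 3 * M 3 0)
      + M 1 3 * (M 2 0 * M 3 2 - M 2 2 * M 3 0))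
    + M 0 2 * (M 1 0 * (M 2 1 * M 3 3 - M 2 3 * M 3 1) - M 1 1 * (M 2 0 * M 3 3 - M 2 3 * M 3 0)
      + M 1 3 * (M 2 0 * M 3 1 - M 2 1 * M 3 0))
    - M 0 3 * (M 1 0 * (M 2 1 * M 3 2 - M 2 2 * M 3 1) - M 1 1 * (M 2 0 * M 3 2 - M 2 2 * M 3 0)
      + M 1 2 * (M 2 0 * M 3 1 - M 2 1 * M 3 0)) := by
  rw [Matrix.det_succ_row_zero]
  simp [Fin.sum_univ_succ, Matrix.det_fin_three, Fin.succAbove]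
  ring

theorem exists_eq_of_transpose_eq_neg {A : Mat4} (hA : Aᵀ = -A) :
    ∃ a₁ a₂ a₃ a₄ a₅ a₆ : ℝ,
      A = !![0, a₁, a₂, a₃; -a₁, 0, a₄, a₅; -a₂, -a₄, 0, a₆; -a₃, -a₅, -a₆, 0] := by
  have h i j : A j i = -A i j := congrFun (congrFun hA i) j
  refine ⟨A 0 1, A 0 2, A 0 3, A 1 2, A 1 3, A 2 3, ?_⟩
  ext i j
  fin_cases i <;> fin_cases j <;> simp <;>
    linarith [h 0 0, h 1 1, h 2 2, h 3 3, h 0 1, h 0 2, h 0 3, h 1 2, h 1 3, h 2 3]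

theorem exists_eq_of_isSymm {M : Mat4} (hM : M.IsSymm) :
    ∃ m₀₀ m₀₁ m₀₂ m₀₃ m₁₁ m₁₂ m₁₃ m₂₂ m₂₃ m₃₃ : ℝ,
      M = !![m₀₀, m₀₁, m₀₂, m₀₃; m₀₁, m₁₁, m₁₂, m₁₃; m₀₂, m₁₂, m₂₂, m₂₃; m₀₃, m₁₃, m₂₃, m₃₃] := by
  refine ⟨M 0 0, M 0 1, M 0 2, M 0 3, M 1 1, M 1 2, M 1 3, M 2 2, M 2 3, M 3 3, ?_⟩
  ext i j
  fin_cases i <;> fin_cases j <;> simp <;> exact hM.apply _ _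

section Linear

variable (A B C : Mat4) (r : ℝ)

theorem w22_comm : w22 A B = w22 B A := by
  simp only [w22]; ring

theorem w22_add_left : w22 (A + B) C = w22 A C + w22 B C := by
  simp only [w22, Matrix.add_apply]; ring

theorem w22_add_right : w22 A (B + C) = w22 A B + w22 A C := by
  simp only [w22, Matrix.add_apply]; ring

theorem w22_smul_left : w22 (r • A) B = r * w22 A B := by
  simp only [w22, Matrix.smul_apply, smul_eq_mul]; ring

theorem w22_smul_right : w22 A (r • B) = r * w22 A B := by
  simp only [w22, Matrix.smul_apply, smul_eq_mul]; ring

theorem w22_neg_right : w22 A (-B) = -w22 A B := by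
  simp only [w22, Matrix.neg_apply]; ring

theorem dual2_add : dual2 (A + B) = dual2 A + dual2 B := by
  ext i j; fin_cases i <;> fin_cases j <;> simp [dual2] <;> ring

theorem dual2_sub : dual2 (A - B) = dual2 A - dual2 B := by
  ext i j; fin_cases i <;> fin_cases j <;> simp [dual2] <;> ring

theorem dual2_smul : dual2 (r • A) = r • dual2 A := by
  ext i j; fin_cases i <;> fin_cases j <;> simp [dual2]

theorem transpose_dual2 : (dual2 A)ᵀ = -dual2 A := by
  ext i j; fin_cases i <;> fin_cases j <;> simp [dual2]

end Linear

theorem w22_dual2_conj {M A B : Mat4} (hM : M.IsSymm) (hA : Aᵀ = -A) (hB : Bᵀ = -B) :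
    w22 A (dual2 (M * B * M)) = (1 / 2) * (Aᵀ * M * B * M).trace := by
  obtain ⟨a₁, a₂, a₃, a₄, a₅, a₆, rfl⟩ := exists_eq_of_transpose_eq_neg hA
  obtain ⟨b₁, b₂, b₃, b₄, b₅, b₆, rfl⟩ := exists_eq_of_transpose_eq_neg hB
  obtain ⟨m₀₀, m₀₁, m₀₂, m₀₃, m₁₁, m₁₂, m₁₃, m₂₂, m₂₃, m₃₃, rfl⟩ := exists_eq_of_isSymm hM
  simp [w22, dual2, Matrix.mul_apply, Matrix.trace, Fin.sum_univ_four]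
  ring

set_option maxHeartbeats 1000000 in
theorem dual2_conj_dual2_conj {M B : Mat4} (hM : M.IsSymm) (hB : Bᵀ = -B) :
    dual2 (M * dual2 (M * B * M) * M) = M.det • B := by
  obtain ⟨b₁, b₂, b₃, b₄, b₅, b₆, rfl⟩ := exists_eq_of_transpose_eq_neg hB
  obtain ⟨m₀₀, m₀₁, m₀₂, m₀₃, m₁₁, m₁₂, m₁₃, m₂₂, m₂₃, m₃₃, rfl⟩ := exists_eq_of_isSymm hM
  rw [Matrix.det_fin_four]
  ext i j
  fin_cases i <;> fin_cases j <;> simp [dual2, Matrix.mul_apply, Fin.sum_univ_four] <;> ring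

section Hodge

variable {G : Mat4}

theorem hodge2_add (A B : Mat4) : hodge2 G (A + B) = hodge2 G A + hodge2 G B := by
  simp only [hodge2, Matrix.mul_add, Matrix.add_mul, dual2_add, smul_add]

theorem hodge2_sub (A B : Mat4) : hodge2 G (A - B) = hodge2 G A - hodge2 G B := by
  simp only [hodge2, Matrix.mul_sub, Matrix.sub_mul, dual2_sub, smul_sub]

theorem hodge2_smul (r : ℝ) (A : Mat4) : hodge2 G (r • A) = r • hodge2 G A := by
  rw [hodge2, hodge2, Matrix.mul_smul, Matrix.smul_mul, dual2_smul, smul_comm]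

theorem transpose_hodge2 (A : Mat4) : (hodge2 G A)ᵀ = -hodge2 G A := by
  rw [hodge2, Matrix.transpose_smul, transpose_dual2, smul_neg]

theorem ip2_add_left (A B C : Mat4) : ip2 G (A + B) C = ip2 G A C + ip2 G B C := by
  simp only [ip2, Matrix.transpose_add, Matrix.add_mul, Matrix.trace_add]; ring

theorem ip2_add_right (A B C : Mat4) : ip2 G A (B + C) = ip2 G A B + ip2 G A C := by
  simp only [ip2, Matrix.mul_add, Matrix.add_mul, Matrix.trace_add]; ring

theorem ip2_comm (hG : G.IsSymm) (A B : Mat4) : ip2 G A B = ip2 G B A := by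
  have hG' : (G⁻¹)ᵀ = G⁻¹ := hG.inv.eq
  rw [ip2, ip2, ← Matrix.trace_transpose]
  simp only [Matrix.transpose_mul, Matrix.transpose_transpose, hG', Matrix.mul_assoc]
  rw [Matrix.trace_mul_comm]
  simp only [Matrix.mul_assoc]

theorem w22_hodge2 (hG : G.IsSymm) {A B : Mat4} (hA : Aᵀ = -A) (hB : Bᵀ = -B) :
    w22 A (hodge2 G B) = ip2 G A B * volScalar G := by
  rw [hodge2, w22_smul_right, w22_dual2_conj hG.inv hA hB, ip2]
  ring

theorem hodge2_hodge2 (hG : G.IsSymm) (hdet : 0 < G.det) {B : Mat4} (hB : Bᵀ = -B) :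
    hodge2 G (hodge2 G B) = B := by
  have hdet_inv : G⁻¹.det * G.det = 1 :=
    Matrix.det_nonsing_inv_mul_det G (isUnit_iff_ne_zero.mpr hdet.ne')
  rw [hodge2, hodge2, Matrix.mul_smul, Matrix.smul_mul, dual2_smul,
    dual2_conj_dual2_conj hG.inv hB, smul_smul, smul_smul, volScalar,
    Real.mul_self_sqrt hdet.le, mul_comm, hdet_inv, one_smul]

end Hodge

def IsSelfDual (G A : Mat4) : Prop := Aᵀ = -A ∧ hodge2 G A = A

def IsAntiSelfDual (G A : Mat4) : Prop := Aᵀ = -A ∧ hodge2 G A = -A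

section SelfDual

variable {G A B : Mat4}

theorem isSelfDual_half_add_hodge2 (hG : G.IsSymm) (hdet : 0 < G.det) {P : Mat4}
    (hP : Pᵀ = -P) : IsSelfDual G ((2:ℝ)⁻¹ • (P + hodge2 G P)) := by
  refine ⟨?_, ?_⟩
  · rw [Matrix.transpose_smul, Matrix.transpose_add, hP, transpose_hodge2]; module
  · rw [hodge2_smul, hodge2_add, hodge2_hodge2 hG hdet hP, add_comm]

theorem isAntiSelfDual_half_sub_hodge2 (hG : G.IsSymm) (hdet : 0 < G.det) {P : Mat4}
    (hP : Pᵀ = -P) : IsAntiSelfDual G ((2:ℝ)⁻¹ • (P - hodge2 G P)) := by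
  refine ⟨?_, ?_⟩
  · rw [Matrix.transpose_smul, Matrix.transpose_sub, hP, transpose_hodge2]; module
  · rw [hodge2_smul, hodge2_sub, hodge2_hodge2 hG hdet hP, ← smul_neg, neg_sub]

theorem IsSelfDual.w22_self (hG : G.IsSymm) (hA : IsSelfDual G A) :
    w22 A A = ip2 G A A * volScalar G := by
  simpa only [hA.2] using w22_hodge2 hG hA.1 hA.1

theorem IsAntiSelfDual.w22_self (hG : G.IsSymm) (hB : IsAntiSelfDual G B) :
    w22 B B = -(ip2 G B B * volScalar G) := by
  simpa only [hB.2, w22_neg_right, neg_neg] using congrArg Neg.neg (w22_hodge2 hG hB.1 hB.1)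

theorem IsSelfDual.ip2_eq_zero (hG : G.IsSymm) (hdet : 0 < G.det) (hA : IsSelfDual G A)
    (hB : IsAntiSelfDual G B) : ip2 G A B = 0 := by
  have hAB := w22_hodge2 hG hA.1 hB.1
  have hBA := w22_hodge2 hG hB.1 hA.1
  rw [hB.2, w22_neg_right] at hAB
  rw [hA.2, w22_comm, ip2_comm hG] at hBA
  have hv : 0 < volScalar G := Real.sqrt_pos.mpr hdet
  -- Together `hAB` and `hBA` give ⟨A, B⟩ vol = -⟨A, B⟩ vol.
  nlinarith

theorem IsSelfDual.w22_eq_zero (hG : G.IsSymm) (hdet : 0 < G.det) (hA : IsSelfDual G A)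
    (hB : IsAntiSelfDual G B) : w22 A B = 0 := by
  have hAB := w22_hodge2 hG hA.1 hB.1
  rw [hB.2, w22_neg_right, hA.ip2_eq_zero hG hdet hB, zero_mul, neg_eq_zero] at hAB
  exact hAB

theorem IsSelfDual.ip2_add_self (hG : G.IsSymm) (hdet : 0 < G.det) (hA : IsSelfDual G A)
    (hB : IsAntiSelfDual G B) : ip2 G (A + B) (A + B) = ip2 G A A + ip2 G B B := by
  rw [ip2_add_left, ip2_add_right, ip2_add_right, ip2_comm hG B A,
    hA.ip2_eq_zero hG hdet hB]
  ring

theorem IsSelfDual.w22_smul_add_smul (hG : G.IsSymm) (hdet : 0 < G.det) (hA : IsSelfDual G A)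
    (hB : IsAntiSelfDual G B) (x y x' y' : ℝ) :
    w22 (x • A + y • B) (x' • A + y' • B) =
      (x * x' * ip2 G A A - y * y' * ip2 G B B) * volScalar G := by
  simp only [w22_add_left, w22_add_right, w22_smul_left, w22_smul_right, hA.w22_self hG,
    hB.w22_self hG, hA.w22_eq_zero hG hdet hB, w22_comm B A]
  ring

end SelfDual

/-- identities for Θ = (*ρ)/u - ½|ρ/u|²ρ with
u = (|ρ⁺|² - |ρ⁻|²)/2. -/
theorem Theta_identities (G : Mat4) (hG : G.PosDef)
    (P : Mat4) (hP : Pᵀ = -P) (hpos : 0 < w22 P P) :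
    let Pp := (2:ℝ)⁻¹ • (P + hodge2 G P)
    let Pm := (2:ℝ)⁻¹ • (P - hodge2 G P)
    let u := (ip2 G Pp Pp - ip2 G Pm Pm) / 2
    let Θ := u⁻¹ • hodge2 G P - (2⁻¹ * (ip2 G P P / u ^ 2)) • P
    w22 Θ P = 0 ∧
    Θ = (2 / u) • Pp - (ip2 G Pp Pp / u ^ 2) • P ∧
    Θ = -((u ^ 2)⁻¹ • (ip2 G Pm Pm • Pp + ip2 G Pp Pp • Pm)) ∧
    w22 Θ Θ = -(2 * ip2 G Pp Pp * ip2 G Pm Pm / u ^ 3) * volScalar G := by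
  intro Pp Pm u Θ
  have hGs : G.IsSymm := Matrix.isHermitian_iff_isSymm.mp hG.isHermitian
  have hdet : 0 < G.det := hG.det_pos
  have hPp : IsSelfDual G Pp := isSelfDual_half_add_hodge2 hGs hdet hP
  have hPm : IsAntiSelfDual G Pm := isAntiSelfDual_half_sub_hodge2 hGs hdet hP
  have hsum : (1:ℝ) • Pp + (1:ℝ) • Pm = P := by simp only [Pp, Pm]; module
  have hdiff : Pp - Pm = hodge2 G P := by simp only [Pp, Pm]; module
  have hwedge := hPp.w22_smul_add_smul hGs hdet hPm
  set a := ip2 G Pp Pp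
  set b := ip2 G Pm Pm
  have hu : 2 * u = a - b := by simp only [u]; ring
  have hPP : w22 P P = 2 * u * volScalar G := by rw [← hsum, hwedge, hu]; ring
  have hu0 : u ≠ 0 := by rintro h; simp [hPP, h] at hpos
  have hip : ip2 G P P = a + b := by
    rw [← hsum, one_smul, one_smul]
    exact hPp.ip2_add_self hGs hdet hPm
  have hΘ : Θ = -((u ^ 2)⁻¹ • (b • Pp + a • Pm)) := by
    simp only [Θ]
    rw [hip, ← hdiff, ← hsum]
    match_scalars <;> field_simp <;> linear_combination u * hu
  have hΘ' : Θ = (-(b / u ^ 2)) • Pp + (-(a / u ^ 2)) • Pm := by rw [hΘ]; module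
  refine ⟨?_, ?_, hΘ, ?_⟩
  · rw [hΘ', ← hsum, hwedge]
    ring
  · rw [hΘ, ← hsum]
    match_scalars <;> field_simp <;> linear_combination u * hu
  · rw [hΘ', hwedge]
    field_simp
    linear_combination a * b * volScalar G * u * hu
end
end
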